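/- arXiv:2308.13255 — 2 statements merged into one kernel-verified Lean document; each statement's English description precedes it below -/
import Mathlib

section
/- Let r ≥ 2, k ≥ 2, 1 ≤ ℓ ≤ k-1 and let m be an integer with 1 ≤ m < k/(k-ℓ). Then R̂_r(P_{ℓ+(m+1)(k-ℓ)}^{(k,ℓ)}) ≤ R̂_r(P_{2m(k-ℓ)}^{(m(k-ℓ), (m-1)(k-ℓ))}) ≤ R̂_r(P_{2m}^{(m)}) ≤ (e·(m+1)·r)^m, where e is Euler's number. -/
open Finset

/-- A `k`-uniform hypergraph, given by its (finite) edge set; vertices are natural numbers. -/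
def IsUniform (k : ℕ) (G : Finset (Finset ℕ)) : Prop :=
  ∀ e ∈ G, e.card = k

/-- The vertex set of a hypergraph. -/
def hVerts (G : Finset (Finset ℕ)) : Finset ℕ := G.biUnion id

/-- `G` contains a copy of `H`, i.e. a subgraph isomorphic to `H`. -/
def IsCopy (H G : Finset (Finset ℕ)) : Prop :=
  ∃ f : ℕ → ℕ, Set.InjOn f ↑(hVerts H) ∧ ∀ e ∈ H, e.image f ∈ G

/-- `G →_r H`: every `r`-coloring of the edges of `G` yields a monochromatic copy of `H`. -/
def Arrows (r : ℕ) (G H : Finset (Finset ℕ)) : Prop :=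
  ∀ χ : Finset ℕ → Fin r, ∃ c : Fin r, IsCopy H (G.filter fun e => χ e = c)

/-- The `r`-color size-Ramsey number of `H`: the minimum number of edges of a
`k`-uniform hypergraph `G` with `G →_r H`. -/
noncomputable def sizeRamsey (k r : ℕ) (H : Finset (Finset ℕ)) : ℕ :=
  sInf {m | ∃ G : Finset (Finset ℕ), IsUniform k G ∧ Arrows r G H ∧ G.card = m}

/-- The `r`-color Ramsey number of `H`: the minimum number of vertices of a
`k`-uniform hypergraph `G` with `G →_r H`. -/
noncomputable def vertexRamsey (k r : ℕ) (H : Finset (Finset ℕ)) : ℕ :=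
  sInf {m | ∃ G : Finset (Finset ℕ), IsUniform k G ∧ Arrows r G H ∧ (hVerts G).card = m}

/-- The `(k,ℓ)`-path with `m` edges: edge `i` (for `0 ≤ i < m`) is
`{i(k-ℓ), i(k-ℓ)+1, …, i(k-ℓ)+k-1}`. -/
def pathWithEdges (k l m : ℕ) : Finset (Finset ℕ) :=
  (Finset.range m).image fun i => (Finset.range k).image fun j => i * (k - l) + j

/-- The `(k,ℓ)`-path on `n` vertices, `P_n^{(k,ℓ)}`; it has `(n-ℓ)/(k-ℓ)` edges. -/
def hPath (k l n : ℕ) : Finset (Finset ℕ) :=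
  pathWithEdges k l ((n - l) / (k - l))

/-!
Blowing up every vertex of a host of the tight path `P^{(m)}_{2m}` into `k - ℓ` consecutive
vertices gives a host of `P^{(m(k-ℓ),(m-1)(k-ℓ))}_{2m(k-ℓ)}`. All `m + 1` edges of the latter
contain the vertex boundary at `m(k-ℓ)`, so inserting there a block of `k - m(k-ℓ)` vertices,
and adding fresh vertices to every edge of the host, gives a host of `P^{(k,ℓ)}` with `m + 1`
edges. For the bound, an `m`-graph without a tight path of `M + 1` edges has at most `M` times
as many edges as its shadow: either some shadow set has codegree at most `M` and its edges can
be deleted, or a tight path can be built greedily. Hence no colour class of the complete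
`m`-graph on `N = m(m+1)r` vertices avoids the path, and `C(N, m) ≤ (eN/m)^m`.
-/

open scoped FinsetFamily

lemma mem_hVerts {G : Finset (Finset ℕ)} {x : ℕ} : x ∈ hVerts G ↔ ∃ e ∈ G, x ∈ e := by
  simp [hVerts]

lemma hVerts_mono {G G' : Finset (Finset ℕ)} (h : G ⊆ G') : hVerts G ⊆ hVerts G' :=
  biUnion_subset_biUnion_of_subset_left _ h

lemma IsCopy.mono {H G G' : Finset (Finset ℕ)} (h : IsCopy H G) (hG : G ⊆ G') : IsCopy H G' :=
  let ⟨f, hinj, hf⟩ := h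
  ⟨f, hinj, fun e he => hG (hf e he)⟩

lemma apply_mem_hVerts_of_image_mem {H G : Finset (Finset ℕ)} {f : ℕ → ℕ}
    (hf : ∀ e ∈ H, e.image f ∈ G) {x : ℕ} (hx : x ∈ hVerts H) : f x ∈ hVerts G := by
  obtain ⟨e, he, hxe⟩ := mem_hVerts.1 hx
  exact mem_hVerts.2 ⟨_, hf e he, mem_image_of_mem f hxe⟩

lemma sizeRamsey_le {k r : ℕ} {G H : Finset (Finset ℕ)} (hu : IsUniform k G)
    (ha : Arrows r G H) : sizeRamsey k r H ≤ G.card :=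
  Nat.sInf_le ⟨G, hu, ha, rfl⟩

-- `hex` excludes the junk value `sInf ∅ = 0` of `sizeRamsey k r H`.
lemma sizeRamsey_le_sizeRamsey {k k' r : ℕ} {H H' : Finset (Finset ℕ)}
    (hex : ∃ G, IsUniform k G ∧ Arrows r G H)
    (htrans : ∀ G, IsUniform k G → Arrows r G H →
      ∃ G', IsUniform k' G' ∧ Arrows r G' H' ∧ G'.card ≤ G.card) :
    sizeRamsey k' r H' ≤ sizeRamsey k r H := by
  obtain ⟨G, hu, ha⟩ := hex
  obtain ⟨G₀, hu₀, ha₀, hcard₀⟩ := Nat.sInf_mem (⟨G.card, G, hu, ha, rfl⟩ :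
    ∃ n, n ∈ {n | ∃ G : Finset (Finset ℕ), IsUniform k G ∧ Arrows r G H ∧ G.card = n})
  obtain ⟨G', hu', ha', hcard'⟩ := htrans G₀ hu₀ ha₀
  calc sizeRamsey k' r H' ≤ G'.card := sizeRamsey_le hu' ha'
    _ ≤ G₀.card := hcard'
    _ = sizeRamsey k r H := hcard₀

def intervalPath (K D M : ℕ) : Finset (Finset ℕ) :=
  (range M).image fun i => Ico (i * D) (i * D + K)

lemma mem_intervalPath {K D M : ℕ} {e : Finset ℕ} :
    e ∈ intervalPath K D M ↔ ∃ i < M, Ico (i * D) (i * D + K) = e := by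
  simp [intervalPath]

lemma hPath_eq_intervalPath {k l n D M : ℕ} (hD : k - l = D) (hD0 : 0 < D)
    (hn : n = l + M * D) : hPath k l n = intervalPath k D M := by
  have hM : (n - l) / (k - l) = M := by
    rw [hD, hn, Nat.add_sub_cancel_left, Nat.mul_div_cancel _ hD0]
  rw [hPath, hM, pathWithEdges, intervalPath, hD]
  refine image_congr fun i _ => ?_
  ext x
  simp only [mem_image, mem_range, mem_Ico]
  exact ⟨fun ⟨j, hj, hx⟩ => by omega, fun hx => ⟨x - i * D, by omega, by omega⟩⟩

def blowupEdge (d : ℕ) (e : Finset ℕ) : Finset ℕ :=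
  e.biUnion fun v => Ico (v * d) (v * d + d)

lemma div_eq_of_mem_Ico {v d x : ℕ} (hx : x ∈ Ico (v * d) (v * d + d)) : x / d = v :=
  Nat.div_eq_of_lt_le (mem_Ico.1 hx).1 (by rw [add_one_mul]; exact (mem_Ico.1 hx).2)

lemma mul_add_mod_mem_Ico {d : ℕ} (hd : 0 < d) (v x : ℕ) :
    v * d + x % d ∈ Ico (v * d) (v * d + d) :=
  mem_Ico.2 ⟨Nat.le_add_right _ _, Nat.add_lt_add_left (Nat.mod_lt x hd) _⟩

section Blowup

variable {d : ℕ}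

lemma mem_blowupEdge (hd : 0 < d) {e : Finset ℕ} {x : ℕ} :
    x ∈ blowupEdge d e ↔ x / d ∈ e := by
  simp only [blowupEdge, mem_biUnion]
  constructor
  · rintro ⟨v, hv, hx⟩
    rwa [div_eq_of_mem_Ico hx]
  · intro hx
    refine ⟨x / d, hx, ?_⟩
    simpa only [Nat.div_add_mod'] using mul_add_mod_mem_Ico hd (x / d) x

lemma card_blowupEdge (e : Finset ℕ) : (blowupEdge d e).card = e.card * d := by
  rw [blowupEdge, card_biUnion]
  · simp
  · intro v _ w _ hvw
    exact disjoint_left.2 fun x hv hw => hvw ((div_eq_of_mem_Ico hv).symm.trans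
      (div_eq_of_mem_Ico hw))

lemma blowupEdge_Ico (hd : 0 < d) (a b : ℕ) : blowupEdge d (Ico a b) = Ico (a * d) (b * d) := by
  ext x
  rw [mem_blowupEdge hd, mem_Ico, mem_Ico, Nat.le_div_iff_mul_le hd, Nat.div_lt_iff_lt_mul hd]

lemma intervalPath_image_blowupEdge (hd : 0 < d) (K D M : ℕ) :
    (intervalPath K D M).image (blowupEdge d) = intervalPath (K * d) (D * d) M := by
  rw [intervalPath, intervalPath, image_image]
  refine image_congr fun i _ => ?_
  simp only [Function.comp_apply, blowupEdge_Ico hd]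
  congr 1 <;> ring

lemma IsUniform.image_blowupEdge {k : ℕ} {G : Finset (Finset ℕ)} (hu : IsUniform k G) :
    IsUniform (k * d) (G.image (blowupEdge d)) := by
  simp only [IsUniform, mem_image, forall_exists_index, and_imp]
  rintro _ e he rfl
  rw [card_blowupEdge, hu e he]

lemma IsCopy.image_blowupEdge (hd : 0 < d) {H G : Finset (Finset ℕ)} (h : IsCopy H G) :
    IsCopy (H.image (blowupEdge d)) (G.image (blowupEdge d)) := by
  obtain ⟨f, hinj, hf⟩ := h
  set F : ℕ → ℕ := fun p => f (p / d) * d + p % d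
  have hdiv (p : ℕ) : F p / d = f (p / d) := div_eq_of_mem_Ico (mul_add_mod_mem_Ico hd _ _)
  have hmod (p : ℕ) : F p % d = p % d := by simp [F]
  refine ⟨F, fun p hp q hq hpq => ?_, fun _ he => ?_⟩
  · have hvert {p : ℕ} (hp : p ∈ hVerts (H.image (blowupEdge d))) : p / d ∈ hVerts H := by
      obtain ⟨_, he, hpe⟩ := mem_hVerts.1 hp
      obtain ⟨e, heH, rfl⟩ := mem_image.1 he
      exact mem_hVerts.2 ⟨e, heH, (mem_blowupEdge hd).1 hpe⟩
    have hquot : p / d = q / d := hinj (hvert hp) (hvert hq) (by rw [← hdiv p, hpq, hdiv q])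
    rw [← Nat.div_add_mod' p d, ← Nat.div_add_mod' q d, hquot, ← hmod p, hpq, hmod q]
  · obtain ⟨e, heH, rfl⟩ := mem_image.1 he
    refine mem_image.2 ⟨e.image f, hf e heH, ?_⟩
    ext x
    simp only [mem_image, mem_blowupEdge hd]
    constructor
    · rintro ⟨v, hv, hvx⟩
      have hv' : (v * d + x % d) / d = v := div_eq_of_mem_Ico (mul_add_mod_mem_Ico hd _ _)
      refine ⟨v * d + x % d, by rwa [hv'], ?_⟩
      simp only [F, hv', hvx]
      rw [Nat.add_comm (v * d), Nat.add_mul_mod_self_right, Nat.mod_mod, Nat.div_add_mod']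
    · rintro ⟨p, hp, rfl⟩
      exact ⟨p / d, hp, (hdiv p).symm⟩

lemma Arrows.image_blowupEdge (hd : 0 < d) {r : ℕ} {G H : Finset (Finset ℕ)}
    (ha : Arrows r G H) :
    Arrows r (G.image (blowupEdge d)) (H.image (blowupEdge d)) := by
  intro χ
  obtain ⟨c, hc⟩ := ha (χ ∘ blowupEdge d)
  refine ⟨c, (hc.image_blowupEdge hd).mono fun _ he => ?_⟩
  obtain ⟨e, he', rfl⟩ := mem_image.1 he
  exact mem_filter.2 ⟨mem_image_of_mem _ (mem_filter.1 he').1, (mem_filter.1 he').2⟩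

lemma exists_host_intervalPath_mul (hd : 0 < d) {m r M : ℕ} {G : Finset (Finset ℕ)}
    (hu : IsUniform m G) (ha : Arrows r G (intervalPath m 1 M)) :
    ∃ G', IsUniform (m * d) G' ∧ Arrows r G' (intervalPath (m * d) d M) ∧
      G'.card ≤ G.card := by
  refine ⟨_, hu.image_blowupEdge, ?_, card_image_le⟩
  simpa only [intervalPath_image_blowupEdge hd, one_mul] using ha.image_blowupEdge hd

end Blowup

def shiftFrom (P s p : ℕ) : ℕ := if p < P then p else p + s

def insertBlock (P s : ℕ) (H : Finset (Finset ℕ)) : Finset (Finset ℕ) :=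
  H.image fun e => e.image (shiftFrom P s) ∪ Ico P (P + s)

lemma intervalPath_add_eq_insertBlock {K D M : ℕ} (s : ℕ) (hMD : M * D ≤ K) :
    intervalPath (K + s) D (M + 1) = insertBlock (M * D) s (intervalPath K D (M + 1)) := by
  rw [insertBlock, intervalPath, intervalPath, image_image]
  refine image_congr fun i hi => ?_
  have hiM : i * D ≤ M * D := Nat.mul_le_mul_right D (Nat.lt_succ_iff.1 (mem_range.1 hi))
  ext x
  simp only [Function.comp_apply, mem_union, mem_image, mem_Ico, shiftFrom]
  constructor
  · intro hx
    by_cases hxP : x < M * D + s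
    · by_cases hxP' : x < M * D
      · exact Or.inl ⟨x, by omega, if_pos hxP'⟩
      · exact Or.inr (by omega)
    · exact Or.inl ⟨x - s, by omega, by rw [if_neg (by omega)]; omega⟩
  · rintro (⟨p, hp, rfl⟩ | hx)
    · split_ifs <;> omega
    · omega

section InsertBlock

variable {P s N : ℕ}

lemma IsCopy.insertBlock {H G : Finset (Finset ℕ)} (h : IsCopy H G)
    (hN : ∀ x ∈ hVerts G, x < N) :
    IsCopy (_root_.insertBlock P s H) (G.image (· ∪ Ico N (N + s))) := by
  obtain ⟨f, hinj, hf⟩ := h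
  -- `F` undoes `shiftFrom P s` and sends the gap `[P, P + s)` onto the fresh vertices.
  set F : ℕ → ℕ := fun x =>
    if x < P then f x else if x < P + s then N + (x - P) else f (x - s)
  have hF_shift (p : ℕ) : F (shiftFrom P s p) = f p := by
    unfold F shiftFrom
    split_ifs <;> first | rfl | omega | (congr 1; omega)
  have hF_block {x : ℕ} (hx : x ∈ Ico P (P + s)) : F x = N + (x - P) := by
    rw [mem_Ico] at hx
    simp only [F, if_neg (not_lt.2 hx.1), if_pos hx.2]
  have hF_Ico : (Ico P (P + s)).image F = Ico N (N + s) := by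
    ext x
    simp only [mem_image]
    constructor
    · rintro ⟨y, hy, rfl⟩
      rw [hF_block hy]
      simp only [mem_Ico] at hy ⊢
      omega
    · intro hx
      rw [mem_Ico] at hx
      exact ⟨P + (x - N), mem_Ico.2 (by omega), by rw [hF_block (mem_Ico.2 (by omega))]; omega⟩
  have hvert {x : ℕ} (hx : x ∈ hVerts (_root_.insertBlock P s H)) :
      x ∈ Ico P (P + s) ∨ ∃ p ∈ hVerts H, shiftFrom P s p = x := by
    obtain ⟨_, he, hxe⟩ := mem_hVerts.1 hx
    obtain ⟨e, heH, rfl⟩ := mem_image.1 he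
    rcases mem_union.1 hxe with hxe | hxe
    · obtain ⟨p, hp, rfl⟩ := mem_image.1 hxe
      exact Or.inr ⟨p, mem_hVerts.2 ⟨e, heH, hp⟩, rfl⟩
    · exact Or.inl hxe
  have hblock_ne {x p : ℕ} (hx : x ∈ Ico P (P + s)) (hp : p ∈ hVerts H) : F x ≠ f p := by
    rw [hF_block hx]
    have := hN _ (apply_mem_hVerts_of_image_mem hf hp)
    omega
  refine ⟨F, fun x hx y hy hxy => ?_, fun _ he => ?_⟩
  · rcases hvert hx with hx | ⟨p, hp, rfl⟩ <;> rcases hvert hy with hy | ⟨q, hq, rfl⟩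
    · rw [hF_block hx, hF_block hy] at hxy
      simp only [mem_Ico] at hx hy
      omega
    · exact absurd (hxy.trans (hF_shift q)) (hblock_ne hx hq)
    · exact absurd ((hF_shift p).symm.trans hxy).symm (hblock_ne hy hp)
    · rw [hF_shift, hF_shift] at hxy
      rw [hinj hp hq hxy]
  · obtain ⟨e, heH, rfl⟩ := mem_image.1 he
    refine mem_image.2 ⟨e.image f, hf e heH, ?_⟩
    rw [image_union, image_image, hF_Ico]
    congr 1
    exact image_congr fun p _ => (hF_shift p).symm

lemma Arrows.insertBlock {r : ℕ} {G H : Finset (Finset ℕ)} (ha : Arrows r G H)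
    (hN : ∀ x ∈ hVerts G, x < N) :
    Arrows r (G.image (· ∪ Ico N (N + s))) (_root_.insertBlock P s H) := by
  intro χ
  obtain ⟨c, hc⟩ := ha fun e => χ (e ∪ Ico N (N + s))
  refine ⟨c, (hc.insertBlock fun x hx => hN x (hVerts_mono (filter_subset _ _) hx)).mono
    fun _ he => ?_⟩
  obtain ⟨e, he', rfl⟩ := mem_image.1 he
  exact mem_filter.2 ⟨mem_image_of_mem _ (mem_filter.1 he').1, (mem_filter.1 he').2⟩

lemma IsUniform.image_union_Ico {k : ℕ} {G : Finset (Finset ℕ)} (hu : IsUniform k G)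
    (hN : ∀ x ∈ hVerts G, x < N) : IsUniform (k + s) (G.image (· ∪ Ico N (N + s))) := by
  simp only [IsUniform, mem_image, forall_exists_index, and_imp]
  rintro _ e he rfl
  have hdisj : Disjoint e (Ico N (N + s)) := disjoint_left.2 fun x hx hx' =>
    absurd (hN x (mem_hVerts.2 ⟨e, he, hx⟩)) (not_lt.2 (mem_Ico.1 hx').1)
  rw [card_union_of_disjoint hdisj, hu e he, Nat.card_Ico, Nat.add_sub_cancel_left]

end InsertBlock

lemma exists_host_intervalPath_of_le {K k D M r : ℕ} (hMD : M * D ≤ K) (hKk : K ≤ k)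
    {G : Finset (Finset ℕ)} (hu : IsUniform K G) (ha : Arrows r G (intervalPath K D (M + 1))) :
    ∃ G', IsUniform k G' ∧ Arrows r G' (intervalPath k D (M + 1)) ∧ G'.card ≤ G.card := by
  obtain ⟨s, rfl⟩ := Nat.exists_eq_add_of_le hKk
  obtain ⟨N, hN⟩ := (hVerts G).exists_nat_subset_range
  have hN' : ∀ x ∈ hVerts G, x < N := fun x hx => mem_range.1 (hN hx)
  refine ⟨_, hu.image_union_Ico hN', ?_, card_image_le⟩
  rw [intervalPath_add_eq_insertBlock s hMD]
  exact ha.insertBlock hN'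

section TightPath

open Function

lemma image_update_range (f : ℕ → ℕ) (n x : ℕ) :
    (range (n + 1)).image (update f n x) = insert x ((range n).image f) := by
  rw [range_add_one, image_insert, update_self]
  congr 1
  exact image_congr fun p hp => update_of_ne (mem_range.1 hp).ne _ _

lemma injOn_update_range {f : ℕ → ℕ} {n x : ℕ} (hf : Set.InjOn f (range n))
    (hx : x ∉ (range n).image f) : Set.InjOn (update f n x) (range (n + 1)) := by
  rw [range_add_one, coe_insert, Set.injOn_insert (by simp)]
  refine ⟨hf.congr fun p hp => (update_of_ne (mem_range.1 hp).ne _ _).symm, ?_⟩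
  rw [update_self]
  rintro ⟨p, hp, hpx⟩
  exact hx (mem_image.2 ⟨p, hp, (update_of_ne (mem_range.1 hp).ne x f ▸ hpx)⟩)

lemma exists_injOn_range_image_eq (s : Finset ℕ) :
    ∃ f : ℕ → ℕ, Set.InjOn f (range s.card) ∧ (range s.card).image f = s := by
  induction s using Finset.induction_on with
  | empty => exact ⟨id, by simp, by simp⟩
  | insert x s hxs ih =>
    obtain ⟨f, hinj, himg⟩ := ih
    rw [card_insert_of_notMem hxs]
    refine ⟨update f s.card x, injOn_update_range hinj ?_, by rw [image_update_range, himg]⟩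
    rwa [himg]

lemma exists_insert_mem_of_card_sdiff_lt {m : ℕ} {H : Finset (Finset ℕ)} (hu : IsUniform m H)
    {σ U : Finset ℕ} (hσm : σ.card + 1 = m)
    (hlt : (U \ σ).card < (H.filter (σ ⊆ ·)).card) : ∃ x ∉ U, insert x σ ∈ H := by
  by_contra! h
  have hsub : H.filter (σ ⊆ ·) ⊆ (U \ σ).image (insert · σ) := by
    intro e he
    obtain ⟨heH, hσe⟩ := mem_filter.1 he
    obtain ⟨x, hxσ, rfl⟩ := exists_eq_insert_iff.2 ⟨hσe, by rw [hu e heH, hσm]⟩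
    have hxU : x ∈ U := by_contra fun hxU => h x hxU heH
    exact mem_image_of_mem _ (mem_sdiff.2 ⟨hxU, hxσ⟩)
  exact (card_le_card hsub).trans card_image_le |>.not_gt hlt

variable {m M : ℕ} {H : Finset (Finset ℕ)}

lemma exists_tightPath_prefix (hu : IsUniform m H) (hm : 0 < m) (hne : H.Nonempty)
    (hcodeg : ∀ σ ∈ ∂ H, M + 1 ≤ (H.filter (σ ⊆ ·)).card) :
    ∀ t ≤ M, ∃ f : ℕ → ℕ, Set.InjOn f (range (m + t)) ∧
      ∀ i ≤ t, (Ico i (i + m)).image f ∈ H := by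
  intro t
  induction t with
  | zero =>
    intro _
    obtain ⟨e, he⟩ := hne
    obtain ⟨f, hinj, himg⟩ := exists_injOn_range_image_eq e
    rw [hu e he] at hinj himg
    refine ⟨f, hinj, fun i hi => ?_⟩
    rwa [Nat.le_zero.1 hi, zero_add, ← range_eq_Ico, himg]
  | succ t ih =>
    intro ht
    obtain ⟨f, hinj, hwin⟩ := ih (by omega)
    set σ := (Ico (t + 1) (t + m)).image f
    set U := (range (m + t)).image f
    have hσU : σ ⊆ U :=
      image_subset_image fun p hp => by simp only [mem_Ico, mem_range] at hp ⊢; omega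
    have hσcard : σ.card = m - 1 := by
      rw [card_image_of_injOn (hinj.mono fun p hp => by simp at hp ⊢; omega), Nat.card_Ico]
      omega
    have hσ : σ ∈ ∂ H := by
      refine mem_shadow_iff_exists_mem_card_add_one.2 ⟨_, hwin t le_rfl, ?_, ?_⟩
      · exact image_subset_image (Ico_subset_Ico (by omega) le_rfl)
      · rw [hu _ (hwin t le_rfl), hσcard]
        omega
    have hUcard : U.card = m + t := by rw [card_image_of_injOn hinj, card_range]
    obtain ⟨x, hxU, hxH⟩ := exists_insert_mem_of_card_sdiff_lt (σ := σ) (U := U) hu (by omega)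
      (by rw [card_sdiff_of_subset hσU, hUcard, hσcard]; have := hcodeg σ hσ; omega)
    have hf_eq : Set.EqOn (update f (m + t) x) f (range (m + t)) :=
      fun p hp => update_of_ne (mem_range.1 hp).ne _ _
    refine ⟨update f (m + t) x, injOn_update_range hinj hxU, fun i hi => ?_⟩
    rcases Nat.lt_or_eq_of_le hi with hi | rfl
    · rw [image_congr (hf_eq.mono fun p hp => by simp at hp ⊢; omega)]
      exact hwin i (by omega)
    · have hIco : Ico (t + 1) (t + 1 + m) = insert (m + t) (Ico (t + 1) (t + m)) := by
        ext p; simp only [mem_Ico, mem_insert]; omega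
      rwa [hIco, image_insert, update_self,
        image_congr (hf_eq.mono fun p hp => by simp at hp ⊢; omega)]

lemma isCopy_tightPath_of_codegree (hu : IsUniform m H) (hm : 0 < m) (hne : H.Nonempty)
    (hcodeg : ∀ σ ∈ ∂ H, M + 1 ≤ (H.filter (σ ⊆ ·)).card) :
    IsCopy (intervalPath m 1 (M + 1)) H := by
  obtain ⟨f, hinj, hwin⟩ := exists_tightPath_prefix hu hm hne hcodeg M le_rfl
  refine ⟨f, hinj.mono fun p hp => ?_, fun e he => ?_⟩
  · obtain ⟨_, he, hpe⟩ := mem_hVerts.1 hp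
    obtain ⟨i, hi, rfl⟩ := mem_intervalPath.1 he
    simp only [mem_Ico, mul_one, coe_range, Set.mem_Iio] at hpe ⊢
    omega
  · obtain ⟨i, hi, rfl⟩ := mem_intervalPath.1 he
    rw [mul_one]
    exact hwin i (by omega)

lemma card_le_mul_card_shadow (hu : IsUniform m H) (hm : 0 < m)
    (hfree : ¬ IsCopy (intervalPath m 1 (M + 1)) H) : H.card ≤ M * (∂ H).card := by
  induction H using Finset.strongInduction with
  | H H ih =>
  rcases H.eq_empty_or_nonempty with rfl | hne
  · simp
  by_cases hcodeg : ∀ σ ∈ ∂ H, M + 1 ≤ (H.filter (σ ⊆ ·)).card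
  · exact absurd (isCopy_tightPath_of_codegree hu hm hne hcodeg) hfree
  push Not at hcodeg
  obtain ⟨σ, hσ, hσM⟩ := hcodeg
  set H' := H.filter (¬ σ ⊆ ·)
  have hH' : H' ⊂ H := by
    obtain ⟨e, he, hσe, -⟩ := mem_shadow_iff_exists_mem_card_add_one.1 hσ
    exact filter_ssubset.2 ⟨e, he, not_not.2 hσe⟩
  have hshadow : ∂ H' ⊆ (∂ H).erase σ := by
    intro τ hτ
    obtain ⟨e, he, hτe, -⟩ := mem_shadow_iff_exists_mem_card_add_one.1 hτ
    refine mem_erase.2 ⟨?_, shadow_mono (filter_subset _ _) hτ⟩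
    rintro rfl
    exact (mem_filter.1 he).2 hτe
  have ih' := ih H' hH' (fun e he => hu e (mem_of_mem_filter e he))
    (fun hc => hfree (hc.mono (filter_subset _ _)))
  have hsplit := card_filter_add_card_filter_not (s := H) (σ ⊆ ·)
  have hcard := card_le_card hshadow
  rw [card_erase_of_mem hσ] at hcard
  have hpos : 0 < (∂ H).card := card_pos.2 ⟨σ, hσ⟩
  calc H.card = (H.filter (σ ⊆ ·)).card + H'.card := hsplit.symm
    _ ≤ M + M * ((∂ H).card - 1) :=
        add_le_add (by omega) (ih'.trans (Nat.mul_le_mul_left M hcard))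
    _ = M * (∂ H).card := by
      rw [Nat.mul_sub, mul_one, Nat.add_sub_cancel' (Nat.le_mul_of_pos_right M hpos)]

end TightPath

lemma shadow_subset_powersetCard_range {m N : ℕ} {H : Finset (Finset ℕ)}
    (hH : H ⊆ (range N).powersetCard m) : ∂ H ⊆ (range N).powersetCard (m - 1) := by
  intro τ hτ
  obtain ⟨e, he, hτe, hcard⟩ := mem_shadow_iff_exists_mem_card_add_one.1 hτ
  obtain ⟨heN, hem⟩ := mem_powersetCard.1 (hH he)
  exact mem_powersetCard.2 ⟨hτe.trans heN, by omega⟩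

lemma arrows_powersetCard_range {m M r : ℕ} (hm : 0 < m) (hr : 0 < r) :
    Arrows r ((range (m * (M + 1) * r)).powersetCard m) (intervalPath m 1 (M + 1)) := by
  set N := m * (M + 1) * r
  set K := (range N).powersetCard m
  intro χ
  by_contra! hfree
  have hclass (c : Fin r) : (K.filter (χ · = c)).card ≤ M * N.choose (m - 1) := by
    have hsub : K.filter (χ · = c) ⊆ K := filter_subset _ _
    calc (K.filter (χ · = c)).card ≤ M * (∂ (K.filter (χ · = c))).card :=
          card_le_mul_card_shadow (fun e he => (mem_powersetCard.1 (hsub he)).2) hm (hfree c)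
      _ ≤ M * ((range N).powersetCard (m - 1)).card := by
          gcongr; exact shadow_subset_powersetCard_range hsub
      _ = M * N.choose (m - 1) := by rw [card_powersetCard, card_range]
  have hcount : N.choose m ≤ r * (M * N.choose (m - 1)) := by
    calc N.choose m = K.card := by rw [card_powersetCard, card_range]
      _ = ∑ c : Fin r, (K.filter (χ · = c)).card :=
          card_eq_sum_card_fiberwise fun e _ => mem_univ (χ e)
      _ ≤ ∑ _c : Fin r, M * N.choose (m - 1) := sum_le_sum fun c _ => hclass c
      _ = r * (M * N.choose (m - 1)) := by simp
  -- `C(N, m) * m = C(N, m - 1) * (N - m + 1)` and `N - m + 1 > r * M * m` contradict `hcount`.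
  have hpascal := Nat.choose_succ_right_eq N (m - 1)
  rw [Nat.sub_add_cancel hm] at hpascal
  have hmN : m ≤ N :=
    (Nat.le_mul_of_pos_right m M.succ_pos).trans (Nat.le_mul_of_pos_right _ hr)
  have hpos : 0 < N.choose (m - 1) := Nat.choose_pos (by omega)
  have hN : r * M * m < N - (m - 1) := by
    have : m ≤ m * r := Nat.le_mul_of_pos_right m hr
    have : N = r * M * m + m * r := by ring
    omega
  have hle : N.choose (m - 1) * (N - (m - 1)) ≤ N.choose (m - 1) * (r * M * m) :=
    calc _ = N.choose m * m := hpascal.symm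
      _ ≤ r * (M * N.choose (m - 1)) * m := Nat.mul_le_mul_right m hcount
      _ = _ := by ring
  exact (Nat.le_of_mul_le_mul_left hle hpos).not_gt hN

lemma choose_le_exp_mul_div_pow (n k : ℕ) : (n.choose k : ℝ) ≤ (Real.exp 1 * n / k) ^ k := by
  rcases Nat.eq_zero_or_pos k with rfl | hk
  · simp
  have hk' : (k : ℝ) ≠ 0 := by positivity
  calc (n.choose k : ℝ) ≤ (n : ℝ) ^ k / k.factorial := Nat.choose_le_pow_div k n
    _ = (n / k : ℝ) ^ k * ((k : ℝ) ^ k / k.factorial) := by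
        rw [← mul_div_assoc, ← mul_pow, div_mul_cancel₀ _ hk']
    _ ≤ (n / k : ℝ) ^ k * Real.exp k := by
        gcongr; exact Real.pow_div_factorial_le_exp _ (Nat.cast_nonneg k) k
    _ = (Real.exp 1 * n / k) ^ k := by rw [← Real.exp_one_pow, ← mul_pow]; ring

theorem stmt14_general (k r l m : ℕ) (hr : 2 ≤ r) (hl2 : l ≤ k - 1)
    (hm1 : 1 ≤ m) (hm2 : m * (k - l) < k) :
    sizeRamsey k r (hPath k l (l + (m + 1) * (k - l))) ≤
        sizeRamsey (m * (k - l)) r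
          (hPath (m * (k - l)) ((m - 1) * (k - l)) (2 * m * (k - l))) ∧
      sizeRamsey (m * (k - l)) r
          (hPath (m * (k - l)) ((m - 1) * (k - l)) (2 * m * (k - l))) ≤
        sizeRamsey m r (hPath m (m - 1) (2 * m)) ∧
      (sizeRamsey m r (hPath m (m - 1) (2 * m)) : ℝ) ≤ (Real.exp 1 * (m + 1) * r) ^ m := by
  have hd : 0 < k - l := by omega
  set d := k - l
  rw [hPath_eq_intervalPath rfl hd rfl,
    hPath_eq_intervalPath (D := d) (M := m + 1)
      (by rw [← Nat.sub_mul, Nat.sub_sub_self hm1, one_mul]) hd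
      (by rw [← add_mul]; congr 1; omega),
    hPath_eq_intervalPath (D := 1) (M := m + 1) (by omega) one_pos (by omega)]
  set N := m * (m + 1) * r
  have hK : IsUniform m ((range N).powersetCard m) := fun e he => (mem_powersetCard.1 he).2
  have hKarrows := arrows_powersetCard_range (M := m) hm1 (by omega : 0 < r)
  obtain ⟨G, hG, hGarrows, -⟩ := exists_host_intervalPath_mul hd hK hKarrows
  refine ⟨sizeRamsey_le_sizeRamsey ⟨G, hG, hGarrows⟩ fun _ hu ha =>
      exists_host_intervalPath_of_le le_rfl hm2.le hu ha,
    sizeRamsey_le_sizeRamsey ⟨_, hK, hKarrows⟩ fun _ hu ha =>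
      exists_host_intervalPath_mul hd hu ha, ?_⟩
  calc (sizeRamsey m r (intervalPath m 1 (m + 1)) : ℝ) ≤ N.choose m := by
        exact_mod_cast (sizeRamsey_le hK hKarrows).trans_eq (by rw [card_powersetCard, card_range])
    _ ≤ (Real.exp 1 * N / m) ^ m := choose_le_exp_mul_div_pow N m
    _ = (Real.exp 1 * (m + 1) * r) ^ m := by
        have : (m : ℝ) ≠ 0 := by positivity
        congr 1; simp only [N]; push_cast; field_simp

theorem stmt14 (k r l m : ℕ) (hk : 2 ≤ k) (hr : 2 ≤ r) (hl1 : 1 ≤ l) (hl2 : l ≤ k - 1)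
    (hm1 : 1 ≤ m) (hm2 : m * (k - l) < k) :
    sizeRamsey k r (hPath k l (l + (m + 1) * (k - l))) ≤
        sizeRamsey (m * (k - l)) r
          (hPath (m * (k - l)) ((m - 1) * (k - l)) (2 * m * (k - l))) ∧
      sizeRamsey (m * (k - l)) r
          (hPath (m * (k - l)) ((m - 1) * (k - l)) (2 * m * (k - l))) ≤
        sizeRamsey m r (hPath m (m - 1) (2 * m)) ∧
      (sizeRamsey m r (hPath m (m - 1) (2 * m)) : ℝ) ≤ (Real.exp 1 * (m + 1) * r) ^ m :=
  stmt14_general k r l m hr hl2 hm1 hm2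
end

section
/- For all r ≥ 2, k ≥ 2 and 1 ≤ ℓ ≤ k-1: R̂_r(P^{(k,ℓ)}_{2k-ℓ}) = r + 1, where P^{(k,ℓ)}_{2k-ℓ} is the (k,ℓ)-path with exactly two edges. -/
open Finset

/-! The sunflower with `r + 1` edges, a common kernel of size `ℓ` and pairwise disjoint petals of
size `k - ℓ`, arrows the two-edge path: by pigeonhole two of its edges share a colour, and any two
of its edges meet in exactly `ℓ` vertices, so they form a copy of the path. Conversely, a
hypergraph with at most `r` edges can be coloured injectively, and then no colour class contains
the two edges of the path. -/

theorem IsCopy.card_le {H G : Finset (Finset ℕ)} (h : IsCopy H G) : H.card ≤ G.card := by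
  obtain ⟨f, hf, hmaps⟩ := h
  refine card_le_card_of_injOn (fun e => e.image f) hmaps fun e he e' he' hee' => ?_
  have hsub : ∀ e ∈ H, (e : Set ℕ) ⊆ hVerts H := fun e he =>
    coe_subset.mpr (subset_biUnion_of_mem id he)
  have : f '' e = f '' e' := by
    simpa only [coe_image] using congrArg ((↑) : Finset ℕ → Set ℕ) hee'
  exact_mod_cast (hf.image_eq_image_iff (hsub e he) (hsub e' he')).mp this

theorem Arrows.lt_card {r : ℕ} {G H : Finset (Finset ℕ)} (hr : 0 < r) (hH : 1 < H.card)
    (h : Arrows r G H) : r < G.card := by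
  classical
  by_contra! hle
  let χ : Finset ℕ → Fin r := fun e =>
    if he : e ∈ G then Fin.castLE hle (G.equivFin ⟨e, he⟩) else ⟨0, hr⟩
  obtain ⟨c, hcopy⟩ := h χ
  have hclass : (G.filter fun e => χ e = c).card ≤ 1 := by
    refine card_le_one.mpr fun a ha b hb => ?_
    obtain ⟨haG, hac⟩ := mem_filter.mp ha
    obtain ⟨hbG, hbc⟩ := mem_filter.mp hb
    simp only [χ, dif_pos haG, dif_pos hbG] at hac hbc
    exact congrArg Subtype.val
      (G.equivFin.injective (Fin.castLE_injective hle (hac.trans hbc.symm)))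
  exact absurd (hcopy.card_le.trans hclass) (by omega)

theorem pathWithEdges_two (k l : ℕ) :
    pathWithEdges k l 2 = {range k, Ico (k - l) (k - l + k)} := by
  rw [pathWithEdges, show range 2 = {0, 1} by decide, image_insert, image_singleton]
  simp only [zero_mul, zero_add, image_id', one_mul, range_eq_Ico, image_add_left_Ico, add_zero]

theorem card_pathWithEdges_two {k l : ℕ} (hlk : l < k) : (pathWithEdges k l 2).card = 2 := by
  rw [pathWithEdges_two, card_pair]
  intro h
  have : 0 ∈ Ico (k - l) (k - l + k) := h ▸ mem_range.mpr (by omega)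
  simp only [mem_Ico] at this
  omega

theorem hPath_two_edges {k l : ℕ} (hlk : l < k) :
    hPath k l (2 * k - l) = pathWithEdges k l 2 := by
  rw [hPath, show 2 * k - l - l = 2 * (k - l) by omega, Nat.mul_div_cancel _ (by omega)]

theorem add_mul_le_of_lt {i j : ℕ} (d : ℕ) (hij : i < j) : i * d + d ≤ j * d := by
  simpa [Nat.succ_mul] using Nat.mul_le_mul_right d hij

def sunflowerEdge (l d i : ℕ) : Finset ℕ := range l ∪ Ico (l + i * d) (l + i * d + d)

def sunflower (l d m : ℕ) : Finset (Finset ℕ) := (range m).image (sunflowerEdge l d)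

section Sunflower

variable {l d : ℕ}

@[simp]
theorem mem_sunflowerEdge {i x : ℕ} :
    x ∈ sunflowerEdge l d i ↔ x < l ∨ l + i * d ≤ x ∧ x < l + i * d + d := by
  simp [sunflowerEdge]

theorem card_sunflowerEdge (i : ℕ) : (sunflowerEdge l d i).card = l + d := by
  rw [sunflowerEdge, card_union_of_disjoint, card_range, Nat.card_Ico, Nat.add_sub_cancel_left]
  exact disjoint_left.mpr fun x hx hx' => by simp only [mem_range, mem_Ico] at hx hx'; omega

theorem sunflowerEdge_injective (hd : 0 < d) : Function.Injective (sunflowerEdge l d) := by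
  intro i j hij
  have hi : l + i * d ∈ sunflowerEdge l d j := hij ▸ mem_sunflowerEdge.mpr (by omega)
  rw [mem_sunflowerEdge] at hi
  rcases lt_trichotomy i j with h | h | h
  · have := add_mul_le_of_lt d h; omega
  · exact h
  · have := add_mul_le_of_lt d h; omega

theorem isUniform_sunflower (m : ℕ) : IsUniform (l + d) (sunflower l d m) := by
  simp only [IsUniform, sunflower, mem_image]
  rintro _ ⟨i, -, rfl⟩
  exact card_sunflowerEdge i

theorem card_sunflower (hd : 0 < d) (m : ℕ) : (sunflower l d m).card = m := by
  rw [sunflower, card_image_of_injective _ (sunflowerEdge_injective hd), card_range]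

/-- The path's first edge `[0, l + d)` goes onto edge `i` and its second edge `[d, 2d + l)` onto
edge `j`; the overlap `[d, l + d)` goes onto the kernel. -/
def sunflowerPathMap (l d i j : ℕ) (v : ℕ) : ℕ :=
  if v < d then l + i * d + v else if v < l + d then v - d else l + j * d + (v - (l + d))

theorem image_range_sunflowerPathMap (i j : ℕ) :
    (range (l + d)).image (sunflowerPathMap l d i j) = sunflowerEdge l d i := by
  ext x
  simp only [mem_image, mem_range, mem_sunflowerEdge, sunflowerPathMap]
  constructor
  · rintro ⟨v, hv, rfl⟩
    split_ifs <;> omega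
  · rintro (hx | hx)
    · exact ⟨x + d, by omega, by rw [if_neg (by omega), if_pos (by omega)]; omega⟩
    · exact ⟨x - (l + i * d), by omega, by rw [if_pos (by omega)]; omega⟩

theorem image_Ico_sunflowerPathMap (i j : ℕ) :
    (Ico d (d + (l + d))).image (sunflowerPathMap l d i j) = sunflowerEdge l d j := by
  ext x
  simp only [mem_image, mem_Ico, mem_sunflowerEdge, sunflowerPathMap]
  constructor
  · rintro ⟨v, hv, rfl⟩
    split_ifs <;> omega
  · rintro (hx | hx)
    · exact ⟨x + d, by omega, by rw [if_neg (by omega), if_pos (by omega)]; omega⟩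
    · exact ⟨l + d + (x - (l + j * d)), by omega,
        by rw [if_neg (by omega), if_neg (by omega)]; omega⟩

theorem injOn_sunflowerPathMap {i j : ℕ} (hij : i ≠ j) :
    Set.InjOn (sunflowerPathMap l d i j) (range (d + (l + d))) := by
  intro a ha b hb hab
  simp only [coe_range, Set.mem_Iio] at ha hb
  have hsep : i * d + d ≤ j * d ∨ j * d + d ≤ i * d := by
    rcases Nat.lt_or_gt_of_ne hij with h | h
    · exact .inl (add_mul_le_of_lt d h)
    · exact .inr (add_mul_le_of_lt d h)
  simp only [sunflowerPathMap] at hab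
  split_ifs at hab <;> omega

theorem isCopy_pathWithEdges_two {G : Finset (Finset ℕ)} {i j : ℕ} (hij : i ≠ j)
    (hi : sunflowerEdge l d i ∈ G) (hj : sunflowerEdge l d j ∈ G) :
    IsCopy (pathWithEdges (l + d) l 2) G := by
  have hverts : hVerts (pathWithEdges (l + d) l 2) = range (d + (l + d)) := by
    ext x
    simp only [hVerts, pathWithEdges_two, add_tsub_cancel_left, biUnion_insert, id_eq,
      singleton_biUnion, mem_union, mem_range, mem_Ico]
    omega
  refine ⟨sunflowerPathMap l d i j, hverts ▸ injOn_sunflowerPathMap hij, ?_⟩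
  rw [pathWithEdges_two, Nat.add_sub_cancel_left]
  simp only [mem_insert, mem_singleton, forall_eq_or_imp, forall_eq,
    image_range_sunflowerPathMap, image_Ico_sunflowerPathMap]
  exact ⟨hi, hj⟩

theorem arrows_sunflower (r : ℕ) :
    Arrows r (sunflower l d (r + 1)) (pathWithEdges (l + d) l 2) := by
  intro χ
  obtain ⟨i, j, hij, hχ⟩ :=
    Fintype.exists_ne_map_eq_of_card_lt (fun i : Fin (r + 1) => χ (sunflowerEdge l d i)) (by simp)
  have hmem : ∀ i : Fin (r + 1), sunflowerEdge l d i ∈ sunflower l d (r + 1) := fun i =>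
    mem_image_of_mem _ (mem_range.mpr i.isLt)
  refine ⟨χ (sunflowerEdge l d i), isCopy_pathWithEdges_two (Fin.val_ne_of_ne hij) ?_ ?_⟩
  · exact mem_filter.mpr ⟨hmem i, rfl⟩
  · exact mem_filter.mpr ⟨hmem j, hχ.symm⟩

end Sunflower

theorem stmt15_general (k r l : ℕ) (hk : 2 ≤ k) (hr : 2 ≤ r) (hl2 : l ≤ k - 1) :
    sizeRamsey k r (hPath k l (2 * k - l)) = r + 1 := by
  obtain ⟨d, hd, rfl⟩ : ∃ d, 0 < d ∧ k = l + d := ⟨k - l, by omega, by omega⟩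
  rw [hPath_two_edges (by omega)]
  refine IsLeast.csInf_eq ⟨⟨sunflower l d (r + 1), isUniform_sunflower _, arrows_sunflower r,
    card_sunflower hd _⟩, ?_⟩
  rintro _ ⟨G, -, hG, rfl⟩
  exact hG.lt_card (by omega) (by rw [card_pathWithEdges_two (by omega)]; norm_num)

theorem stmt15 (k r l : ℕ) (hk : 2 ≤ k) (hr : 2 ≤ r) (hl1 : 1 ≤ l) (hl2 : l ≤ k - 1) :
    sizeRamsey k r (hPath k l (2 * k - l)) = r + 1 :=
  stmt15_general k r l hk hr hl2
end
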